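/- arXiv:2310.00903 — 3 statements merged into one kernel-verified Lean document; each statement's English description precedes it below -/
import Mathlib

section
/- The A-module F = C^{Zⁿ} of all complex-valued functions on Zⁿ is an injective A-module, where A = C[σ₁, σ₁⁻¹, ..., σₙ, σₙ⁻¹] acts by shifts. -/
noncomputable section

/-- `A n` is the Laurent polynomial ring `ℂ[σ₁,σ₁⁻¹,…,σₙ,σₙ⁻¹]`. -/
abbrev A (n : ℕ) : Type := AddMonoidAlgebra ℂ (Fin n → ℤ)

/-- `F n` is the space of all complex valued functions on the lattice `ℤⁿ`. -/
abbrev F (n : ℕ) : Type := (Fin n → ℤ) → ℂ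

/-- The shift `σ^y` acts on functions by translation: `(σ^y f)(x) = f (x + y)`. -/
def shiftHom (n : ℕ) : Multiplicative (Fin n → ℤ) →* Module.End ℂ (F n) where
  toFun y :=
    { toFun := fun f x => f (x + y.toAdd)
      map_add' := fun _ _ => rfl
      map_smul' := fun _ _ => rfl }
  map_one' := by ext f x; simp
  map_mul' y w := by
    ext f x
    simp [Module.End.mul_apply, add_assoc]

/-- The `A`-module structure on `F` by shifts. -/
instance moduleAF (n : ℕ) : Module (A n) (F n) :=
  Module.compHom (F n)
    ((AddMonoidAlgebra.lift ℂ (Module.End ℂ (F n)) (Fin n → ℤ) (shiftHom n)).toRingHom)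

lemma smul_def' {n : ℕ} (a : A n) (f : F n) (x : Fin n → ℤ) :
    (a • f) x = a.coeff.sum fun y c => c * f (x + y) := by
  show (AddMonoidAlgebra.lift ℂ (Module.End ℂ (F n)) (Fin n → ℤ) (shiftHom n)) a f x = _
  rw [AddMonoidAlgebra.lift_apply]
  simp [Finsupp.sum, shiftHom, smul_eq_mul]

/-!
Evaluation at `0` identifies `F` with the coinduced module `Hom_ℂ(A, ℂ)`: `f` corresponds to
`a ↦ (a • f) 0`, and `φ` to `x ↦ φ (σ^x)`. A module of this form satisfies Baer's criterion, because
an `A`-linear map `g` on an ideal is determined by the `ℂ`-linear functional `i ↦ (g i) 0`, and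
this functional extends from the ideal to all of `A` since `ℂ` is a field.
-/

theorem Module.Baer.of_existsUnique_functional {K R M : Type*} [Field K] [Ring R] [Algebra K R]
    [AddCommGroup M] [Module R M] [Module K M] [IsScalarTower K R M] (ε : M →ₗ[K] K)
    (h : ∀ φ : R →ₗ[K] K, ∃! m : M, ∀ r : R, ε (r • m) = φ r) : Module.Baer R M := by
  intro I g
  obtain ⟨φ, hφ⟩ :=
    LinearMap.exists_extend (ε ∘ₗ g.restrictScalars K : I.restrictScalars K →ₗ[K] K)
  obtain ⟨m, hm, -⟩ := h φ
  refine ⟨LinearMap.toSpanSingleton R M m, fun i hi => ?_⟩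
  refine (h (φ ∘ₗ LinearMap.mulRight K i)).unique (y₁ := i • m) (fun r => ?_) (fun r => ?_)
  · simp [← mul_smul, hm]
  · calc ε (r • g ⟨i, hi⟩) = ε (g ⟨r * i, I.mul_mem_left r hi⟩) := by rw [← map_smul]; rfl
      _ = φ (r * i) := (LinearMap.congr_fun hφ _).symm

lemma single_smul_apply {n : ℕ} (y : Fin n → ℤ) (c : ℂ) (f : F n) (x : Fin n → ℤ) :
    (AddMonoidAlgebra.single y c • f) x = c * f (x + y) := by
  simp [smul_def']

instance (n : ℕ) : IsScalarTower ℂ (A n) (F n) where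
  smul_assoc c a f := by
    ext x
    rw [Algebra.smul_def, mul_smul, AddMonoidAlgebra.coe_algebraMap, Function.comp_apply,
      single_smul_apply, add_zero]
    rfl

lemma existsUnique_smul_apply_zero {n : ℕ} (φ : A n →ₗ[ℂ] ℂ) :
    ∃! f : F n, ∀ a : A n, (a • f) 0 = φ a := by
  set f : F n := fun x => φ (AddMonoidAlgebra.single x 1)
  refine ⟨f, fun a => ?_, fun f' hf' => funext fun x => ?_⟩
  · calc (a • f) 0 = a.coeff.sum fun y c => φ (c • AddMonoidAlgebra.single y 1) := by
          simp only [f, smul_def', zero_add, map_smul, smul_eq_mul]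
      _ = φ a := by
          simp only [AddMonoidAlgebra.smul_single', mul_one]
          rw [← map_finsuppSum, AddMonoidAlgebra.sum_coeff_single]
  · simpa [single_smul_apply] using hf' (AddMonoidAlgebra.single x 1)

/-- `F = ℂ^{ℤⁿ}` with the shift action is an injective `A`-module. -/
theorem functions_injective_module (n : ℕ) : Module.Injective (A n) (F n) :=
  (Module.Baer.of_existsUnique_functional (LinearMap.proj 0) existsUnique_smul_apply_zero).injective
end
end

section
/- Let G be a finite group acting C-linearly on the Laurent polynomial ring A by algebra automorphisms, coordinate-wise on A^k, and let P ⊊ A^k be a proper G-invariant submodule. Then the space of G-invariant solutions Ker_F(P)^G = {f ∈ Ker_F(P) : g·f = f for all g ∈ G} is nonzero. -/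
/-!
Since `P` is proper, some unit vector `eⱼ` lies outside `P`; it is fixed by `G` because `G` acts
by algebra automorphisms. Take a functional on `A^k` vanishing on `P` and nonzero at `eⱼ`, and
average it over `G`: the average still vanishes on the `G`-stable `P`, is `G`-invariant, and takes
the value `|G| · φ(eⱼ) ≠ 0` at `eⱼ`. Through `Hom_ℂ(A^k, ℂ) ≅ F^k` it is the required solution.
-/

noncomputable section

/-- The extension of a function `f : ℤⁿ → ℂ` to a linear functional on `A`,
via the monomial basis: `fext f a = ∑_y a_y f(y)`. -/
def fext {n : ℕ} (f : F n) (a : A n) : ℂ := a.coeff.sum fun y c => c * f y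

section InvariantDual

variable {K V G : Type*} [Field K] [AddCommGroup V] [Module K V] [Group G] [Fintype G]
  [DistribMulAction G V] [SMulCommClass G K V]

theorem exists_invariant_dual_ne_zero (hG : (Fintype.card G : K) ≠ 0) {W : Submodule K V}
    (hW : ∀ g : G, ∀ w ∈ W, g • w ∈ W) {v : V} (hv : ∀ g : G, g • v = v) (hvW : v ∉ W) :
    ∃ Φ : Module.Dual K V, (∀ w ∈ W, Φ w = 0) ∧ (∀ (g : G) (x : V), Φ (g • x) = Φ x) ∧
      Φ v ≠ 0 := by
  obtain ⟨φ, hφv, hφW⟩ := W.exists_dual_map_eq_bot_of_notMem hvW inferInstance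
  let Φ : Module.Dual K V := ∑ g : G, φ ∘ₗ DistribSMul.toLinearMap K V g
  have hΦ (x : V) : Φ x = ∑ g : G, φ (g • x) := by simp [Φ, LinearMap.sum_apply]
  refine ⟨Φ, fun w hw => ?_, fun g x => ?_, ?_⟩
  · rw [hΦ]
    exact Finset.sum_eq_zero fun g _ => LinearMap.le_ker_iff_map.mpr hφW (hW g w hw)
  · simp only [hΦ, smul_smul]
    exact Fintype.sum_equiv (Equiv.mulRight g) _ _ fun _ => rfl
  · simpa [hΦ, hv] using And.intro hG hφv

end InvariantDual

theorem Submodule.exists_single_one_notMem {R ι : Type*} [Semiring R] [Finite ι] [DecidableEq ι]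
    {P : Submodule R (ι → R)} (hP : P ≠ ⊤) : ∃ j, Pi.single j (1 : R) ∉ P := by
  by_contra! h
  apply hP
  rw [eq_top_iff, ← (Pi.basisFun R ι).span_eq, Submodule.span_le]
  rintro _ ⟨j, rfl⟩
  simpa using h j

theorem LinearMap.apply_eq_sum_apply_single {R M ι : Type*} [Semiring R] [AddCommMonoid M]
    [Module R M] [Fintype ι] [DecidableEq ι] {N : Type*} [AddCommMonoid N] [Module R N]
    (Φ : (ι → M) →ₗ[R] N) (v : ι → M) : Φ v = ∑ j, Φ (Pi.single j (v j)) := by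
  rw [← map_sum, Finset.univ_sum_single]

theorem AddMonoidAlgebra.dual_apply_eq_sum_coeff {R M : Type*} [CommSemiring R] [AddMonoid M]
    (L : Module.Dual R (AddMonoidAlgebra R M)) (a : AddMonoidAlgebra R M) :
    L a = a.coeff.sum fun y c => c * L (single y 1) := by
  conv_lhs => rw [← sum_coeff_single a]
  rw [map_finsuppSum]
  refine Finsupp.sum_congr fun y _ => ?_
  rw [← smul_eq_mul, ← map_smul, smul_single', mul_one]

section DualToFun

variable {n k : ℕ}

-- The isomorphism `Hom_ℂ(A^k, ℂ) ≅ F^k`: evaluate the functional on the monomials `σ^x` of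
-- each coordinate.
def dualToFun (Φ : Module.Dual ℂ (Fin k → A n)) : Fin k → F n :=
  fun j x => Φ (Pi.single j (AddMonoidAlgebra.single x 1))

theorem fext_dualToFun (Φ : Module.Dual ℂ (Fin k → A n)) (j : Fin k) (a : A n) :
    fext (dualToFun Φ j) a = Φ (Pi.single j a) :=
  (AddMonoidAlgebra.dual_apply_eq_sum_coeff (Φ ∘ₗ LinearMap.single ℂ (fun _ => A n) j) a).symm

theorem smul_dualToFun_apply (Φ : Module.Dual ℂ (Fin k → A n)) (j : Fin k) (a : A n)
    (x : Fin n → ℤ) :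
    (a • dualToFun Φ j) x = Φ (Pi.single j (AddMonoidAlgebra.single x 1 * a)) := by
  rw [smul_def']
  refine ((AddMonoidAlgebra.dual_apply_eq_sum_coeff (Φ ∘ₗ LinearMap.single ℂ (fun _ => A n) j ∘ₗ
    LinearMap.mulLeft ℂ (AddMonoidAlgebra.single x 1)) a).trans
    (Finsupp.sum_congr fun y _ => ?_)).symm
  simp [dualToFun]

theorem sum_smul_dualToFun_apply (Φ : Module.Dual ℂ (Fin k → A n)) (p : Fin k → A n)
    (x : Fin n → ℤ) :
    (∑ j, p j • dualToFun Φ j) x = Φ (AddMonoidAlgebra.single x (1 : ℂ) • p) := by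
  simp only [Finset.sum_apply, smul_dualToFun_apply, Φ.apply_eq_sum_apply_single (_ • p),
    Pi.smul_apply, smul_eq_mul]

end DualToFun

/-- If a proper submodule `P ⊊ A^k` is invariant under a finite group `G` of
`ℂ`-algebra automorphisms of `A` (acting coordinate-wise on `A^k`), then the
system of difference equations defined by `P` admits a nonzero `G`-symmetric
solution, i.e. a nonzero solution fixed by the dual action of `G`. -/
theorem exists_symmetric_solution (n k : ℕ)
    (G : Subgroup (A n ≃ₐ[ℂ] A n)) [Finite G]
    (P : Submodule (A n) (Fin k → A n)) (hP : P ≠ ⊤)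
    (hinv : ∀ g ∈ G, ∀ p ∈ P, (fun j => g (p j)) ∈ P) :
    ∃ f : Fin k → F n,
      (∀ p ∈ P, (∑ j, p j • f j) = 0) ∧ f ≠ 0 ∧
      (∀ g ∈ G, ∀ (j : Fin k) (a : A n), fext (f j) (g a) = fext (f j) a) := by
  have := Fintype.ofFinite G
  obtain ⟨j₀, hj₀⟩ := P.exists_single_one_notMem hP
  obtain ⟨Φ, hΦP, hΦG, hΦj₀⟩ := exists_invariant_dual_ne_zero (G := G)
    (Nat.cast_ne_zero.mpr Fintype.card_ne_zero) (W := P.restrictScalars ℂ)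
    (fun g => hinv g g.2) (fun g => by simp [← Pi.single_smul']) hj₀
  refine ⟨dualToFun Φ, fun p hp => ?_, fun h => hΦj₀ ?_, fun g hg j a => ?_⟩
  · ext x
    rw [sum_smul_dualToFun_apply]
    exact hΦP _ (P.smul_mem _ hp)
  · simpa [dualToFun, AddMonoidAlgebra.one_def] using congrFun (congrFun h j₀) 0
  · simpa [fext_dualToFun, ← Pi.single_smul'] using hΦG ⟨g, hg⟩ (Pi.single j a)
end
end

section
/- Let G be a finite subgroup of (C*)ⁿ acting on A = C[σ₁,σ₁⁻¹,...,σₙ,σₙ⁻¹] by σᵢ ↦ ζᵢσᵢ. Then A is a free module over the fixed subalgebra A^G of rank equal to |G|. -/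
noncomputable section

/-- The monoid hom sending `σ^y` to `(∏ᵢ ζᵢ^{yᵢ}) σ^y`. -/
def homHom {n : ℕ} (ζ : Fin n → ℂˣ) : Multiplicative (Fin n → ℤ) →* A n where
  toFun y := AddMonoidAlgebra.single y.toAdd ((∏ i, ζ i ^ (y.toAdd i) : ℂˣ) : ℂ)
  map_one' := by
    simp [AddMonoidAlgebra.one_def]
  map_mul' y w := by
    simp [AddMonoidAlgebra.single_mul_single, zpow_add, Finset.prod_mul_distrib]

/-- The homothety algebra automorphism (as an algebra endomorphism)
`σᵢ ↦ ζᵢσᵢ` of the Laurent polynomial ring, i.e. `σ^x ↦ ζ^x σ^x`. -/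
def actU {n : ℕ} (ζ : Fin n → ℂˣ) : A n →ₐ[ℂ] A n :=
  AddMonoidAlgebra.lift ℂ (A n) (Fin n → ℤ) (homHom ζ)

/-- The fixed subalgebra `A^G` of the homothety action of `G ⊆ (ℂ*)ⁿ`. -/
def fixedSubalg (n : ℕ) (G : Subgroup (Fin n → ℂˣ)) : Subalgebra ℂ (A n) where
  carrier := {a | ∀ ζ ∈ G, actU ζ a = a}
  add_mem' := by intro a b ha hb ζ hζ; simp [map_add, ha ζ hζ, hb ζ hζ]
  mul_mem' := by intro a b ha hb ζ hζ; simp [map_mul, ha ζ hζ, hb ζ hζ]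
  algebraMap_mem' := by
    intro c ζ hζ
    simp only [Algebra.algebraMap_eq_smul_one, map_smul, map_one]

/-!
A homothety `ζ` acts diagonally on monomials, `σ^x ↦ ζ^x σ^x` with `ζ^x = ∏ ζᵢ^xᵢ`, so `A^G` is
spanned by the monomials whose exponents lie in the lattice `L = {x | ζ^x = 1 for all ζ ∈ G}`.
Grading `A` by `ℤⁿ/L` gives a graded algebra whose degree-zero part is `A^G` and which has an
invertible monomial in every degree; one such monomial per degree is an `A^G`-basis of `A`.
The pairing `(x, ζ) ↦ ζ^x` of `ℤⁿ/L` with `G` is nondegenerate on both sides, so each of these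
finite abelian groups embeds into the character group of the other, whence `|ℤⁿ/L| = |G|`.
-/

open Function

namespace GradedAlgebra

variable {ι R B : Type*} [DecidableEq ι] [AddGroup ι] [CommRing R] [Ring B] [Algebra R B]
  (𝒜 : ι → Submodule R B) [GradedAlgebra 𝒜] {S : Subalgebra R B} (u : ι → Bˣ)

theorem linearIndependent_units (hu : ∀ i, (u i : B) ∈ 𝒜 i) (hS : ∀ s ∈ S, s ∈ 𝒜 0) :
    LinearIndependent S (fun i => (u i : B)) := by
  rw [linearIndependent_iff']
  intro t g hg j hj
  have hmem : ∀ i, (g i : B) * u i ∈ 𝒜 i := fun i => by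
    simpa using SetLike.GradedMul.mul_mem (hS _ (g i).2) (hu i)
  have hproj : GradedRing.proj 𝒜 j (∑ i ∈ t, g i • (u i : B)) = g j * u j := by
    rw [map_sum, Finset.sum_eq_single_of_mem j hj]
    · rw [GradedRing.proj_apply]
      exact DirectSum.decompose_of_mem_same 𝒜 (hmem j)
    · intro i _ hij
      rw [GradedRing.proj_apply]
      exact DirectSum.decompose_of_mem_ne 𝒜 (hmem i) hij
  rw [hg, map_zero, eq_comm, Units.mul_left_eq_zero] at hproj
  exact Subtype.ext hproj

theorem span_units_eq_top (hu : ∀ i, (↑(u i)⁻¹ : B) ∈ 𝒜 (-i)) (hS : ∀ a ∈ 𝒜 0, a ∈ S) :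
    Submodule.span S (Set.range fun i => (u i : B)) = ⊤ := by
  classical
  refine Submodule.eq_top_iff'.mpr fun a => ?_
  rw [← DirectSum.sum_support_decompose 𝒜 a]
  refine Submodule.sum_mem _ fun i _ => ?_
  have hcoeff : (DirectSum.decompose 𝒜 a i : B) * (↑(u i)⁻¹ : B) ∈ S :=
    hS _ (by simpa using SetLike.GradedMul.mul_mem (DirectSum.decompose 𝒜 a i).2 (hu i))
  have : (DirectSum.decompose 𝒜 a i : B) = (⟨_, hcoeff⟩ : S) • (u i : B) := by
    simp [Subalgebra.smul_def, mul_assoc]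
  rw [this]
  exact Submodule.smul_mem _ _ (Submodule.subset_span ⟨i, rfl⟩)

def basisOfUnits (hu : ∀ i, (u i : B) ∈ 𝒜 i) (hu' : ∀ i, (↑(u i)⁻¹ : B) ∈ 𝒜 (-i))
    (hS : ∀ a, a ∈ S ↔ a ∈ 𝒜 0) : Module.Basis ι S B :=
  .mk (linearIndependent_units 𝒜 u hu fun s hs => (hS s).mp hs)
    (span_units_eq_top 𝒜 u hu' fun a ha => (hS a).mpr ha).ge

end GradedAlgebra

namespace AddMonoidAlgebra

open QuotientAddGroup

variable {k M : Type*} [CommRing k] [AddCommGroup M] (L : AddSubgroup M)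

theorem mem_gradeBy_mk'_zero_iff (a : k[M]) :
    a ∈ gradeBy k (mk' L) 0 ↔ ↑a.coeff.support ⊆ (L : Set M) := by
  simp [mem_gradeBy_iff, Set.subset_def]

def cosetUnit (q : M ⧸ L) : k[M]ˣ := Units.map (of k M) (toUnits (Multiplicative.ofAdd q.out))

theorem coe_cosetUnit (q : M ⧸ L) : (cosetUnit (k := k) L q : k[M]) = single q.out 1 := rfl

theorem coe_cosetUnit_inv (q : M ⧸ L) :
    (↑(cosetUnit (k := k) L q)⁻¹ : k[M]) = single (-q.out) 1 :=
  rfl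

def cosetBasis (S : Subalgebra k k[M]) (hS : ∀ a, a ∈ S ↔ ↑a.coeff.support ⊆ (L : Set M)) :
    Module.Basis (M ⧸ L) S k[M] := by
  classical
  exact GradedAlgebra.basisOfUnits (gradeBy k (mk' L)) (cosetUnit L)
      (fun q => by simpa [coe_cosetUnit] using single_mem_gradeBy (mk' L) q.out (1 : k))
      (fun q => by simpa [coe_cosetUnit_inv] using single_mem_gradeBy (mk' L) (-q.out) (1 : k))
      (fun a => (hS a).trans (mem_gradeBy_mk'_zero_iff L a).symm)

end AddMonoidAlgebra

section CharacterDuality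

variable {X P M : Type*} [CommGroup P] [Finite P] [CommMonoid M]
  [HasEnoughRootsOfUnity M (Monoid.exponent P)]

theorem finite_of_injective_characters {f : X → P →* Mˣ} (hf : Injective f) : Finite X :=
  have := Finite.of_equiv _
    (CommGroup.monoidHom_mulEquiv_of_hasEnoughRootsOfUnity P M).some.symm.toEquiv
  Finite.of_injective f hf

theorem card_le_of_injective_characters {f : X → P →* Mˣ} (hf : Injective f) :
    Nat.card X ≤ Nat.card P := by
  have := Finite.of_equiv _
    (CommGroup.monoidHom_mulEquiv_of_hasEnoughRootsOfUnity P M).some.symm.toEquiv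
  rw [← CommGroup.card_monoidHom_of_hasEnoughRootsOfUnity P M]
  exact Nat.card_le_card_of_injective f hf

end CharacterDuality

section Homothety

variable {n : ℕ}

def monomialChar (x : Fin n → ℤ) : (Fin n → ℂˣ) →* ℂˣ where
  toFun ζ := ∏ i, ζ i ^ x i
  map_one' := by simp
  map_mul' ζ ζ' := by simp [mul_zpow, Finset.prod_mul_distrib]

theorem monomialChar_add (x y : Fin n → ℤ) (ζ : Fin n → ℂˣ) :
    monomialChar (x + y) ζ = monomialChar x ζ * monomialChar y ζ := by
  simp [monomialChar, zpow_add, Finset.prod_mul_distrib]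

theorem monomialChar_neg (x : Fin n → ℤ) (ζ : Fin n → ℂˣ) :
    monomialChar (-x) ζ = (monomialChar x ζ)⁻¹ := by
  simp [monomialChar]

theorem monomialChar_single (i : Fin n) (ζ : Fin n → ℂˣ) :
    monomialChar (Pi.single i 1) ζ = ζ i := by
  simp [monomialChar, Pi.single_apply]

theorem actU_single (ζ : Fin n → ℂˣ) (x : Fin n → ℤ) (c : ℂ) :
    actU ζ (AddMonoidAlgebra.single x c) = AddMonoidAlgebra.single x (c * monomialChar x ζ) := by
  rw [actU, AddMonoidAlgebra.lift_single]
  exact AddMonoidAlgebra.smul_single c x _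

theorem coeff_actU (ζ : Fin n → ℂˣ) (a : A n) (x : Fin n → ℤ) :
    (actU ζ a).coeff x = a.coeff x * monomialChar x ζ := by
  induction a using AddMonoidAlgebra.induction_linear with
  | zero => simp
  | add a b ha hb => simp [ha, hb, add_mul]
  | single y c =>
    rw [actU_single]
    by_cases h : y = x
    · subst h; simp
    · simp [AddMonoidAlgebra.coeff_single, h]

theorem actU_eq_self_iff (ζ : Fin n → ℂˣ) (a : A n) :
    actU ζ a = a ↔ ∀ x ∈ a.coeff.support, monomialChar x ζ = 1 := by
  simp only [← AddMonoidAlgebra.coeff_inj, Finsupp.ext_iff, coeff_actU, Finsupp.mem_support_iff]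
  refine forall_congr' fun x => ?_
  rw [← sub_eq_zero, ← mul_sub_one, mul_eq_zero, sub_eq_zero, Units.val_eq_one,
    or_iff_not_imp_left]

variable (G : Subgroup (Fin n → ℂˣ))

def invariantExponents : AddSubgroup (Fin n → ℤ) where
  carrier := {x | ∀ ζ ∈ G, monomialChar x ζ = 1}
  zero_mem' ζ _ := by simp [monomialChar]
  add_mem' hx hy ζ hζ := by rw [monomialChar_add, hx ζ hζ, hy ζ hζ, mul_one]
  neg_mem' hx ζ hζ := by rw [monomialChar_neg, hx ζ hζ, inv_one]

theorem mem_fixedSubalg_iff (a : A n) :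
    a ∈ fixedSubalg n G ↔ ↑a.coeff.support ⊆ (invariantExponents G : Set (Fin n → ℤ)) := by
  simp only [fixedSubalg, Subalgebra.mem_mk, actU_eq_self_iff, Set.subset_def, SetLike.mem_coe]
  exact ⟨fun h x hx ζ hζ => h ζ hζ x hx, fun h x hx ζ hζ => h ζ hζ x hx⟩

def cosetChar (q : (Fin n → ℤ) ⧸ invariantExponents G) : G →* ℂˣ :=
  (monomialChar q.out).comp G.subtype

theorem cosetChar_injective : Injective (cosetChar G) := by
  intro q q' h
  rw [← QuotientAddGroup.out_eq' q, ← QuotientAddGroup.out_eq' q', QuotientAddGroup.eq]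
  intro ζ hζ
  have : monomialChar q.out ζ = monomialChar q'.out ζ := DFunLike.congr_fun h ⟨ζ, hζ⟩
  rw [monomialChar_add, monomialChar_neg, this, inv_mul_cancel]

def quotientChar (ζ : G) : Multiplicative ((Fin n → ℤ) ⧸ invariantExponents G) →* ℂˣ :=
  AddMonoidHom.toMultiplicativeLeft <| QuotientAddGroup.lift _
    (AddMonoidHom.mk' (fun x => .ofMul (monomialChar x ζ)) fun x y => monomialChar_add x y ζ)
    fun _ hx => congrArg Additive.ofMul (hx ζ ζ.2)

theorem quotientChar_mk (ζ : G) (x : Fin n → ℤ) :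
    quotientChar G ζ (.ofAdd x) = monomialChar x ζ :=
  rfl

theorem quotientChar_injective : Injective (quotientChar G) := by
  intro ζ ζ' h
  ext i : 2
  have := DFunLike.congr_fun h (.ofAdd (Pi.single i 1 : Fin n → ℤ))
  rwa [quotientChar_mk, quotientChar_mk, monomialChar_single, monomialChar_single] at this

variable [Finite G]

theorem finite_quotient_invariantExponents : Finite ((Fin n → ℤ) ⧸ invariantExponents G) :=
  finite_of_injective_characters (M := ℂ) (cosetChar_injective G)

theorem card_quotient_invariantExponents :
    Nat.card ((Fin n → ℤ) ⧸ invariantExponents G) = Nat.card G := by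
  have := finite_quotient_invariantExponents G
  exact le_antisymm (card_le_of_injective_characters (M := ℂ) (cosetChar_injective G))
    (card_le_of_injective_characters (P := Multiplicative _) (quotientChar_injective G))

end Homothety

/-- For a finite subgroup `G ⊆ (ℂ*)ⁿ` acting on the Laurent ring `A` by
homotheties of the variables, `A` is a free module over the fixed subalgebra
`A^G` of rank `|G|`. -/
theorem laurent_free_over_fixed_of_rank_card
    (n : ℕ) (G : Subgroup (Fin n → ℂˣ)) [Finite G] :
    Nonempty (Module.Basis (Fin (Nat.card G)) ↥(fixedSubalg n G) (A n)) := by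
  have := finite_quotient_invariantExponents G
  exact ⟨(AddMonoidAlgebra.cosetBasis _ _ (mem_fixedSubalg_iff G)).reindex
    (Finite.equivFinOfCardEq (card_quotient_invariantExponents G))⟩
end
end
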